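/- arXiv:1308.2163 — 7 statements merged into one kernel-verified Lean document; each statement's English description precedes it below -/
import Mathlib

section
/- For every n ≥ 1 and every k with 0 ≤ k ≤ 3^{n-1} − 1, the triple of letters of φⁿ(2) at positions 3k, 3k+1, 3k+2 is a permutation of 123, i.e., the three letters are pairwise distinct. -/
/-- Letters: `0,1,2` represent `1,2,3`. `sigmaM` exchanges letters 1 and 2. -/
def sigmaM : Fin 3 → Fin 3
  | 0 => 1
  | 1 => 0
  | 2 => 2

/-- `rhoM` exchanges letters 2 and 3. -/
def rhoM : Fin 3 → Fin 3
  | 0 => 0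
  | 1 => 2
  | 2 => 1

/-- `phi a = σ(a) · a · ρ(a)`. -/
def phi (a : List (Fin 3)) : List (Fin 3) := a.map sigmaM ++ a ++ a.map rhoM

/-- Kurosaki word `φⁿ(2)` (the letter 2 is encoded as `1 : Fin 3`). -/
def K (n : ℕ) : List (Fin 3) := phi^[n] [1]

/-- `w` has period `p`. -/
def HasPeriod (w : List (Fin 3)) (p : ℕ) : Prop :=
  0 < p ∧ ∀ i, i + p < w.length → w[i]! = w[i + p]!

def IsLeastPeriod (w : List (Fin 3)) (p : ℕ) : Prop :=
  HasPeriod w p ∧ ∀ q, HasPeriod w q → p ≤ q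

/-- every factor has exponent at most 7/4. -/
def Avoids74 (w : List (Fin 3)) : Prop :=
  ∀ x p, x <:+: w → x ≠ [] → IsLeastPeriod x p → 4 * x.length ≤ 7 * p

/-- `w` contains no nonempty factor of the form `x ++ x`. -/
def SqFree (w : List (Fin 3)) : Prop :=
  ∀ x : List (Fin 3), x ≠ [] → ¬ (x ++ x) <:+: w

/-- the triple of `w` at positions `3k, 3k+1, 3k+2` is a permutation of `123`. -/
def TripleDistinct (w : List (Fin 3)) : Prop :=
  ∀ k, 3 * k + 2 < w.length →
    w[3 * k]! ≠ w[3 * k + 1]! ∧ w[3 * k]! ≠ w[3 * k + 2]! ∧ w[3 * k + 1]! ≠ w[3 * k + 2]!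

theorem List.getElem!_append_left {α : Type*} [Inhabited α] {u : List α} (v : List α) {i : ℕ}
    (h : i < u.length) : (u ++ v)[i]! = u[i]! := by
  simp only [getElem!_eq_getElem?_getD, List.getElem?_append_left h]

theorem List.getElem!_append_right {α : Type*} [Inhabited α] {u : List α} (v : List α) {i : ℕ}
    (h : u.length ≤ i) : (u ++ v)[i]! = v[i - u.length]! := by
  simp only [getElem!_eq_getElem?_getD, List.getElem?_append_right h]

theorem List.getElem!_map {α β : Type*} [Inhabited α] [Inhabited β] (f : α → β) {u : List α}
    {i : ℕ} (h : i < u.length) : (u.map f)[i]! = f u[i]! := by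
  rw [getElem!_pos u i h, getElem!_pos _ i (by simpa using h), List.getElem_map]

theorem length_phi (w : List (Fin 3)) : (phi w).length = 3 * w.length := by
  simp only [phi, List.length_append, List.length_map]
  ring

theorem K_succ (n : ℕ) : K (n + 1) = phi (K n) :=
  Function.iterate_succ_apply' phi n [1]

theorem length_K (n : ℕ) : (K n).length = 3 ^ n := by
  induction n with
  | zero => rfl
  | succ n ih => rw [K_succ, length_phi, ih, pow_succ, mul_comm]

theorem sigmaM_injective : Function.Injective sigmaM := by decide

theorem rhoM_injective : Function.Injective rhoM := by decide

namespace TripleDistinct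

theorem map {w : List (Fin 3)} {f : Fin 3 → Fin 3} (hf : Function.Injective f)
    (hw : TripleDistinct w) : TripleDistinct (w.map f) := by
  intro k hk
  rw [List.length_map] at hk
  obtain ⟨h01, h02, h12⟩ := hw k hk
  simp only [List.getElem!_map f (by omega : 3 * k < w.length),
    List.getElem!_map f (by omega : 3 * k + 1 < w.length),
    List.getElem!_map f (by omega : 3 * k + 2 < w.length)]
  exact ⟨hf.ne h01, hf.ne h02, hf.ne h12⟩

/-- Since `3 ∣ |u|`, no aligned triple of `u ++ v` straddles the junction. -/
theorem append {u v : List (Fin 3)} (h3 : 3 ∣ u.length) (hu : TripleDistinct u)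
    (hv : TripleDistinct v) : TripleDistinct (u ++ v) := by
  obtain ⟨m, hm⟩ := h3
  intro k hk
  rw [List.length_append] at hk
  rcases lt_or_ge k m with hkm | hkm
  · simp only [List.getElem!_append_left v (by omega : 3 * k < u.length),
      List.getElem!_append_left v (by omega : 3 * k + 1 < u.length),
      List.getElem!_append_left v (by omega : 3 * k + 2 < u.length)]
    exact hu k (by omega)
  · simp only [List.getElem!_append_right v (by omega : u.length ≤ 3 * k),
      List.getElem!_append_right v (by omega : u.length ≤ 3 * k + 1),
      List.getElem!_append_right v (by omega : u.length ≤ 3 * k + 2)]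
    rw [show 3 * k - u.length = 3 * (k - m) by omega,
      show 3 * k + 1 - u.length = 3 * (k - m) + 1 by omega,
      show 3 * k + 2 - u.length = 3 * (k - m) + 2 by omega]
    exact hv (k - m) (by omega)

theorem phi {w : List (Fin 3)} (h3 : 3 ∣ w.length) (hw : TripleDistinct w) :
    TripleDistinct (phi w) :=
  append (by simpa using dvd_add h3 h3) (append (by simpa using h3) (hw.map sigmaM_injective) hw)
    (hw.map rhoM_injective)

end TripleDistinct

theorem tripleDistinct_K {n : ℕ} (hn : 1 ≤ n) : TripleDistinct (K n) := by
  induction n, hn using Nat.le_induction with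
  | base =>
    intro k hk
    obtain rfl : k = 0 := by rw [length_K] at hk; omega
    decide
  | succ n hn ih =>
    rw [K_succ]
    exact ih.phi (length_K n ▸ dvd_pow_self 3 (by omega))

theorem stmt1 : ∀ n : ℕ, 1 ≤ n → ∀ k : ℕ, k < 3 ^ (n - 1) →
    (K n)[3 * k]! ≠ (K n)[3 * k + 1]! ∧ (K n)[3 * k]! ≠ (K n)[3 * k + 2]! ∧
    (K n)[3 * k + 1]! ≠ (K n)[3 * k + 2]! := by
  intro n hn k hk
  have hpow : 3 ^ n = 3 * 3 ^ (n - 1) := by rw [← pow_succ', Nat.sub_add_cancel hn]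
  exact tripleDistinct_K hn k (by rw [length_K]; omega)
end

section
/- For all n ≥ 1, the word obtained from φⁿ(2) by extracting the middle letter of each consecutive block of three (i.e., the letters at positions ≡ 1 mod 3) equals φ^{n−1}(2). -/
/-! The extraction `f` of middle letters (`middleLetters`) commutes with letter-to-letter maps
and with concatenation of words whose lengths are multiples of 3, hence with `φ` on such words.
Since `φ(2) = 123` has middle letter `2`, induction on `n` gives `f(φⁿ(2)) = φⁿ⁻¹(2)`. -/

section MiddleLetters

variable {α β : Type*} [Inhabited α] [Inhabited β]

def middleLetters (w : List α) : List α :=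
  (List.range (w.length / 3)).map fun i => w[3 * i + 1]!

theorem length_middleLetters (w : List α) : (middleLetters w).length = w.length / 3 := by
  simp [middleLetters]

theorem middleLetters_map (g : α → β) (w : List α) :
    middleLetters (w.map g) = (middleLetters w).map g := by
  refine List.ext_getElem (by simp [length_middleLetters]) fun i _ hi => ?_
  rw [List.length_map, length_middleLetters] at hi
  replace hi : 3 * i + 1 < w.length := by omega
  simp [middleLetters, hi]

theorem middleLetters_append {u : List α} (hu : 3 ∣ u.length) (v : List α) :
    middleLetters (u ++ v) = middleLetters u ++ middleLetters v := by
  obtain ⟨k, hk⟩ := hu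
  have hlen : (u ++ v).length / 3 = k + v.length / 3 := by simp only [List.length_append]; omega
  rw [middleLetters, hlen, List.range_add, List.map_append, List.map_map, middleLetters,
    middleLetters, hk, Nat.mul_div_cancel_left _ three_pos]
  congr 1
  · refine List.map_congr_left fun i hi => ?_
    rw [List.mem_range] at hi
    have : 3 * i + 1 < u.length := by omega
    simp [List.getElem!_eq_getElem?_getD, List.getElem?_append_left this]
  · refine List.map_congr_left fun i hi => ?_
    have : 3 * (k + i) + 1 = u.length + (3 * i + 1) := by omega
    simp [List.getElem!_eq_getElem?_getD, this, List.getElem?_append_right]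

end MiddleLetters

theorem middleLetters_phi {w : List (Fin 3)} (hw : 3 ∣ w.length) :
    middleLetters (phi w) = phi (middleLetters w) := by
  have hmap (g : Fin 3 → Fin 3) : 3 ∣ (w.map g).length := by rwa [List.length_map]
  rw [phi, middleLetters_append (by simpa using Nat.dvd_add (hmap sigmaM) hw),
    middleLetters_append (hmap sigmaM), middleLetters_map, middleLetters_map, phi]

theorem middleLetters_K_succ (n : ℕ) : middleLetters (K (n + 1)) = K n := by
  induction n with
  | zero => decide
  | succ n ih =>
    rw [K_succ, middleLetters_phi (by rw [length_K]; exact dvd_pow_self 3 n.succ_ne_zero), ih,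
      K_succ]

theorem stmt2 : ∀ n : ℕ, 1 ≤ n →
    (List.range (3 ^ (n - 1))).map (fun i => (K n)[3 * i + 1]!) = K (n - 1) := by
  intro n hn
  obtain ⟨m, rfl⟩ := Nat.exists_eq_add_of_le' hn
  simpa [middleLetters, length_K, pow_succ] using middleLetters_K_succ m
end

section
/- If w = w₀w₁⋯w₁₁ is a word over {1,2,3} such that each of the four blocks w₀w₁w₂, w₃w₄w₅, w₆w₇w₈, w₉w₁₀w₁₁ is a permutation of 123 and w₀ = w₃ = w₆ = w₉, then w contains a square of length 6, 9, or 12. -/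
/-!
A block `a b c` of three distinct letters is determined by `a` and `b`, and once `a` is fixed
there are only two choices for `b`. So among four blocks starting with `a`, either two
consecutive ones coincide, giving a square of length 6, or they alternate as `XYXY`, which is a
square of length 12.
-/

theorem eq_of_ne_of_ne_of_card_le_three {α : Type*} [Fintype α] (hα : Fintype.card α ≤ 3)
    {a x y z : α} (hx : x ≠ a) (hy : y ≠ a) (hz : z ≠ a) (hxy : x ≠ y) (hyz : y ≠ z) :
    x = z := by
  classical
  by_contra hxz
  have hcard : ({a, x, y, z} : Finset α).card = 4 := by
    rw [Finset.card_insert_of_notMem, Finset.card_insert_of_notMem, Finset.card_pair hyz] <;>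
      simp [*, Ne.symm hx, Ne.symm hy, Ne.symm hz]
  have := Finset.card_le_univ ({a, x, y, z} : Finset α)
  omega

theorem eq_or_eq_or_eq_or_alternating {α : Type*} [Fintype α] (hα : Fintype.card α ≤ 3)
    {a b₁ b₂ b₃ b₄ : α} (h₁ : b₁ ≠ a) (h₂ : b₂ ≠ a) (h₃ : b₃ ≠ a) (h₄ : b₄ ≠ a) :
    b₁ = b₂ ∨ b₂ = b₃ ∨ b₃ = b₄ ∨ (b₁ = b₃ ∧ b₂ = b₄) := by
  by_cases h₁₂ : b₁ = b₂
  · exact .inl h₁₂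
  by_cases h₂₃ : b₂ = b₃
  · exact .inr (.inl h₂₃)
  by_cases h₃₄ : b₃ = b₄
  · exact .inr (.inr (.inl h₃₄))
  exact .inr (.inr (.inr ⟨eq_of_ne_of_ne_of_card_le_three hα h₁ h₂ h₃ h₁₂ h₂₃,
    eq_of_ne_of_ne_of_card_le_three hα h₂ h₃ h₄ h₂₃ h₃₄⟩))

theorem Fin.third_eq_of_distinct {a b c c' : Fin 3} (h : a ≠ b ∧ a ≠ c ∧ b ≠ c)
    (h' : a ≠ b ∧ a ≠ c' ∧ b ≠ c') : c = c' :=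
  eq_of_ne_of_ne_of_card_le_three (a := b) (by simp) h.2.2.symm h.1 h'.2.2.symm h.2.1.symm h'.2.1

theorem stmt5 (w : List (Fin 3)) (hlen : w.length = 12)
    (htrip : TripleDistinct w)
    (h03 : w[0]! = w[3]!) (h06 : w[0]! = w[6]!) (h09 : w[0]! = w[9]!) :
    ∃ x : List (Fin 3), x ≠ [] ∧ (x ++ x) <:+: w ∧
      ((x ++ x).length = 6 ∨ (x ++ x).length = 9 ∨ (x ++ x).length = 12) := by
  obtain ⟨a, b₁, c₁, a₃, b₂, c₂, a₆, b₃, c₃, a₉, b₄, c₄, rfl⟩ :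
      ∃ a b₁ c₁ a₃ b₂ c₂ a₆ b₃ c₃ a₉ b₄ c₄,
        w = [a, b₁, c₁, a₃, b₂, c₂, a₆, b₃, c₃, a₉, b₄, c₄] := by
    match w, hlen with
    | [a, b₁, c₁, a₃, b₂, c₂, a₆, b₃, c₃, a₉, b₄, c₄], _ =>
      exact ⟨_, _, _, _, _, _, _, _, _, _, _, _, rfl⟩
  have t₁ := htrip 0 (by simp)
  have t₂ := htrip 1 (by simp)
  have t₃ := htrip 2 (by simp)
  have t₄ := htrip 3 (by simp)
  norm_num [List.getElem!_cons_zero, List.getElem!_cons_succ] at t₁ t₂ t₃ t₄ h03 h06 h09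
  subst h03 h06 h09
  rcases eq_or_eq_or_eq_or_alternating (by simp) (Ne.symm t₁.1) (Ne.symm t₂.1) (Ne.symm t₃.1)
    (Ne.symm t₄.1) with rfl | rfl | rfl | ⟨rfl, rfl⟩
  · obtain rfl := Fin.third_eq_of_distinct t₁ t₂
    exact ⟨[a, b₁, c₁], by simp, ⟨[], [a, b₃, c₃, a, b₄, c₄], by simp⟩, by simp⟩
  · obtain rfl := Fin.third_eq_of_distinct t₂ t₃
    exact ⟨[a, b₂, c₂], by simp, ⟨[a, b₁, c₁], [a, b₄, c₄], by simp⟩, by simp⟩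
  · obtain rfl := Fin.third_eq_of_distinct t₃ t₄
    exact ⟨[a, b₃, c₃], by simp, ⟨[a, b₁, c₁, a, b₂, c₂], [], by simp⟩, by simp⟩
  · obtain rfl := Fin.third_eq_of_distinct t₁ t₃
    obtain rfl := Fin.third_eq_of_distinct t₂ t₄
    exact ⟨[a, b₁, c₁, a, b₂, c₂], by simp, ⟨[], [], by simp⟩, by simp⟩
end

section
/- Suppose w = a₀⋯a_{m−1} is a squarefree word over {1,2,3} in which every triple a_{3k}a_{3k+1}a_{3k+2} is a permutation of 123. Then for any q with 3q+5 < m, the letters a_{3q} and a_{3q+1} are uniquely determined by a_{3q+2}, a_{3q+3}, a_{3q+4}, a_{3q+5}: if a_{3q+2} = a_{3q+4} then a_{3q+1} = a_{3q+5} and a_{3q} = a_{3q+3}. -/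
/-! Since `a_{3q+2} = a_{3q+4}`, the letter `a_{3q+3}` differs from `a_{3q+1}` (otherwise
`a_{3q+1} ⋯ a_{3q+4}` is a square) and from `a_{3q+4} = a_{3q+2}`, so it is the third letter `a_{3q}`
of the first triple. Then `a_{3q+5}` differs from `a_{3q+3} = a_{3q}` and `a_{3q+4} = a_{3q+2}`,
so it is `a_{3q+1}`. -/

theorem Fin.eq_of_ne_of_ne_of_ne {a b c x : Fin 3} (hab : a ≠ b) (hac : a ≠ c) (hbc : b ≠ c)
    (hxb : x ≠ b) (hxc : x ≠ c) : x = a := by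
  omega

theorem List.infix_of_getElem!_four {α : Type*} [Inhabited α] (w : List α) (i : ℕ)
    (h : i + 3 < w.length) :
    [w[i]!, w[i + 1]!, w[i + 2]!, w[i + 3]!] <:+: w := by
  have hdrop : w.drop i = w[i] :: w[i + 1] :: w[i + 2] :: w[i + 3] :: w.drop (i + 4) := by
    rw [List.drop_eq_getElem_cons (by omega), List.drop_eq_getElem_cons (by omega),
      List.drop_eq_getElem_cons (by omega), List.drop_eq_getElem_cons h]
  refine ⟨w.take i, w.drop (i + 4), ?_⟩
  simp only [getElem!_pos w i (by omega), getElem!_pos w (i + 1) (by omega),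
    getElem!_pos w (i + 2) (by omega), getElem!_pos w (i + 3) h]
  calc w.take i ++ [w[i], w[i + 1], w[i + 2], w[i + 3]] ++ w.drop (i + 4)
      = w.take i ++ w.drop i := by rw [hdrop]; simp
    _ = w := List.take_append_drop i w

theorem SqFree.getElem!_ne_of_getElem!_eq {w : List (Fin 3)} (hsf : SqFree w) {i : ℕ}
    (hi : i + 3 < w.length) (h : w[i + 1]! = w[i + 3]!) : w[i]! ≠ w[i + 2]! := by
  intro h'
  apply hsf [w[i]!, w[i + 1]!] (List.cons_ne_nil _ _)
  simpa [h', h] using List.infix_of_getElem!_four w i hi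

theorem stmt9 (w : List (Fin 3)) (hsf : SqFree w) (htrip : TripleDistinct w)
    (q : ℕ) (hbound : 3 * q + 5 < w.length) (h : w[3 * q + 2]! = w[3 * q + 4]!) :
    w[3 * q + 1]! = w[3 * q + 5]! ∧ w[3 * q]! = w[3 * q + 3]! := by
  obtain ⟨hab, hac, hbc⟩ := htrip q (by omega)
  obtain ⟨hde, hdf, hef⟩ : w[3 * q + 3]! ≠ w[3 * q + 4]! ∧ w[3 * q + 3]! ≠ w[3 * q + 5]! ∧
      w[3 * q + 4]! ≠ w[3 * q + 5]! := htrip (q + 1) (by omega)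
  have hbd : w[3 * q + 1]! ≠ w[3 * q + 3]! :=
    hsf.getElem!_ne_of_getElem!_eq (i := 3 * q + 1) (by omega) h
  have hda : w[3 * q + 3]! = w[3 * q]! :=
    Fin.eq_of_ne_of_ne_of_ne hab hac hbc hbd.symm (h ▸ hde)
  have hfb : w[3 * q + 5]! = w[3 * q + 1]! :=
    Fin.eq_of_ne_of_ne_of_ne hab.symm hbc hac (hda ▸ hdf.symm) (h ▸ hef.symm)
  exact ⟨hfb.symm, hda.symm⟩
end

section
/- If w = a₀⋯a_{m−1} contains a 7/4⁺-power xyx occurring with x starting at positions p and p+s where p ≡ 1 (mod 3), s ≡ 0 (mod 3), |x| = r, r/s > 3/4, and every triple a_{3k}a_{3k+1}a_{3k+2} of w is a permutation of 123, then w also contains a 7/4⁺-power with the same period s starting at position p − 1. -/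
/-!
A letter is determined by the two other letters of a triple of pairwise distinct letters over a
three-letter alphabet. Since `p ≡ 1` and `s ≡ 0 (mod 3)`, the letters at `p, p + 1` and at
`p + s, p + s + 1` are the last two letters of aligned triples; they agree by the repetition, so
the first letters `w[p - 1]` and `w[p - 1 + s]` agree too, and `x` extends one letter to the left.
-/

theorem Fin.eq_of_ne_of_ne_three {a a' b c : Fin 3} (hbc : b ≠ c) (hab : a ≠ b) (hac : a ≠ c)
    (ha'b : a' ≠ b) (ha'c : a' ≠ c) : a = a' := by
  revert a a' b c; decide

theorem TripleDistinct.getElem!_eq_of_tail_eq {w : List (Fin 3)} (h : TripleDistinct w) {k l : ℕ}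
    (hk : 3 * k + 2 < w.length) (hl : 3 * l + 2 < w.length)
    (h₁ : w[3 * k + 1]! = w[3 * l + 1]!) (h₂ : w[3 * k + 2]! = w[3 * l + 2]!) :
    w[3 * k]! = w[3 * l]! := by
  obtain ⟨hk₀₁, hk₀₂, hk₁₂⟩ := h k hk
  obtain ⟨hl₀₁, hl₀₂, -⟩ := h l hl
  exact Fin.eq_of_ne_of_ne_three hk₁₂ hk₀₁ hk₀₂ (h₁ ▸ hl₀₁) (h₂ ▸ hl₀₂)

theorem stmt11 (w : List (Fin 3)) (htrip : TripleDistinct w) (p s r : ℕ)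
    (hp : p % 3 = 1) (hs : s % 3 = 0) (hrs : r ≤ s) (hexp : 4 * r > 3 * s)
    (hbound : p + s + r ≤ w.length)
    (hrep : ∀ i, i < r → w[p + i]! = w[p + s + i]!) :
    (∀ i, i < r + 1 → w[(p - 1) + i]! = w[(p - 1) + s + i]!) ∧ 4 * (r + 1) > 3 * s := by
  obtain ⟨k, rfl⟩ : ∃ k, p = 3 * k + 1 := ⟨p / 3, by omega⟩
  obtain ⟨t, rfl⟩ : ∃ t, s = 3 * t := ⟨s / 3, by omega⟩
  have hhead : w[3 * k]! = w[3 * (k + t)]! := by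
    refine htrip.getElem!_eq_of_tail_eq (by omega) (by omega) ?_ ?_
    · convert hrep 0 (by omega) using 2; ring
    · convert hrep 1 (by omega) using 2; ring
  refine ⟨fun i hi => ?_, by omega⟩
  rcases i with _ | i
  · convert hhead using 2 <;> omega
  · convert hrep i (by omega) using 2 <;> omega
end

section
/- Let w be a word over {1,2,3} in which every triple a_{3k}a_{3k+1}a_{3k+2} is a permutation of 123, and suppose w contains a repetition with a_{3q+i} = a_{3q+s+i} for 1 ≤ i ≤ r, where s ≡ 2 (mod 3) and r ≥ 11. Then a_{3q} = a_{3q+3} = a_{3q+6} = a_{3q+9}. -/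
/-!
Write `s = 3t + 2`. The repetition shifts the last two letters of the triple at `3m` onto the
first two letters of the triple at `3(m + t + 1)`; both triples are permutations of `123`, so the
remaining letters agree as well, and one more step of the repetition gives `a_{3m+3} = a_{3m}`.
-/

lemma fin_three_eq_of_ne {a b c d : Fin 3} (hab : a ≠ b) (hac : a ≠ c) (hbc : b ≠ c)
    (hda : d ≠ a) (hdb : d ≠ b) : d = c := by
  fin_cases a <;> fin_cases b <;> fin_cases c <;> fin_cases d <;> simp_all

lemma TripleDistinct.getElem!_add_three_eq {w : List (Fin 3)} (htrip : TripleDistinct w)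
    {m s : ℕ} (hs : s % 3 = 2) (hlen : 3 * m + s + 3 < w.length)
    (hrep : ∀ i, 1 ≤ i → i ≤ 3 → w[3 * m + i]! = w[3 * m + s + i]!) :
    w[3 * m + 3]! = w[3 * m]! := by
  obtain ⟨n, hn⟩ : ∃ n, 3 * m + s + 1 = 3 * n := ⟨(3 * m + s + 1) / 3, by omega⟩
  have h1 : w[3 * m + 1]! = w[3 * n]! := hn ▸ hrep 1 le_rfl (by norm_num)
  have h2 : w[3 * m + 2]! = w[3 * n + 1]! := by
    rw [← hn]; exact hrep 2 (by norm_num) (by norm_num)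
  have h3 : w[3 * m + 3]! = w[3 * n + 2]! := by
    rw [show 3 * n + 2 = 3 * m + s + 3 by omega]; exact hrep 3 (by norm_num) le_rfl
  obtain ⟨a01, a02, a12⟩ := htrip m (by omega)
  obtain ⟨b01, b02, b12⟩ := htrip n (by omega)
  rw [h3]
  exact fin_three_eq_of_ne a12 a01.symm a02.symm (h1 ▸ b02.symm) (h2 ▸ b12.symm)

theorem stmt15 (w : List (Fin 3)) (htrip : TripleDistinct w) (q s r : ℕ)
    (hs : s % 3 = 2) (hr : 11 ≤ r) (hbound : 3 * q + s + r < w.length)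
    (hrep : ∀ i, 1 ≤ i → i ≤ r → w[3 * q + i]! = w[3 * q + s + i]!) :
    w[3 * q]! = w[3 * q + 3]! ∧ w[3 * q]! = w[3 * q + 6]! ∧ w[3 * q]! = w[3 * q + 9]! := by
  have step : ∀ j ≤ 2, w[3 * q + 3 * j + 3]! = w[3 * q + 3 * j]! := by
    intro j hj
    have key := htrip.getElem!_add_three_eq (m := q + j) hs (by omega) fun i hi hi3 => by
      have h := hrep (3 * j + i) (by omega) (by omega)
      rwa [show 3 * q + (3 * j + i) = 3 * (q + j) + i by ring,
        show 3 * q + s + (3 * j + i) = 3 * (q + j) + s + i by ring] at h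
    rwa [mul_add] at key
  have h0 := step 0 (by norm_num)
  have h1 := step 1 (by norm_num)
  have h2 := step 2 (by norm_num)
  simp only [mul_zero, add_zero, mul_one, add_assoc, Nat.reduceAdd, Nat.reduceMul] at h0 h1 h2
  exact ⟨h0.symm, (h1.trans h0).symm, (h2.trans (h1.trans h0)).symm⟩
end

section
/- If w is a word over {1,2,3} in which every triple at positions 3k, 3k+1, 3k+2 is a permutation of 123, and w contains a repetition of period s ≡ 0 (mod 3) and length ℓ with ℓ/s > 7/4 starting at position p ≡ 0 (mod 3) with length a multiple of 3, then the word f(w) formed by the letters of w at positions ≡ 1 (mod 3) contains a repetition of period s/3 and length ℓ/3, hence a 7/4⁺-power. -/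
theorem List.getElem!_map_range {α : Type*} [Inhabited α] (f : ℕ → α) {m n : ℕ} (h : m < n) :
    ((List.range n).map f)[m]! = f m := by
  rw [getElem!_pos _ m (by simpa using h)]
  simp

theorem repetition_decimate {α : Type*} [Inhabited α] (w : List α) {d r p s ℓ : ℕ} (hr : r < d)
    (hp : d ∣ p) (hs : d ∣ s) (hl : d ∣ ℓ) (hbound : p + ℓ ≤ w.length)
    (hrep : ∀ i, i + s < ℓ → w[p + i]! = w[p + s + i]!) (i : ℕ) (hi : i + s / d < ℓ / d) :
    ((List.range (w.length / d)).map (fun j => w[d * j + r]!))[p / d + i]! =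
      ((List.range (w.length / d)).map (fun j => w[d * j + r]!))[p / d + s / d + i]! := by
  obtain ⟨p, rfl⟩ := hp
  obtain ⟨s, rfl⟩ := hs
  obtain ⟨ℓ, rfl⟩ := hl
  have hd : 0 < d := by omega
  simp only [Nat.mul_div_cancel_left _ hd] at hi ⊢
  have hfit : d * (p + s + i + 1) ≤ w.length := by nlinarith
  have hlt : ∀ j, j ≤ p + s + i → j < w.length / d := fun j hj =>
    (Nat.le_div_iff_mul_le hd).2 (by nlinarith)
  rw [List.getElem!_map_range _ (hlt _ (by omega)), List.getElem!_map_range _ (hlt _ le_rfl)]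
  have hin : d * i + r + d * s < d * ℓ := by nlinarith
  convert hrep (d * i + r) (by omega) using 2 <;> ring

theorem stmt16_general (w : List (Fin 3)) (p s ℓ : ℕ)
    (hp : p % 3 = 0) (hs : s % 3 = 0) (hl : ℓ % 3 = 0)
    (hexp : 4 * ℓ > 7 * s) (hbound : p + ℓ ≤ w.length)
    (hrep : ∀ i, i + s < ℓ → w[p + i]! = w[p + s + i]!) :
    (∀ i, i + s / 3 < ℓ / 3 →
      ((List.range (w.length / 3)).map (fun j => w[3 * j + 1]!))[p / 3 + i]! =
      ((List.range (w.length / 3)).map (fun j => w[3 * j + 1]!))[p / 3 + s / 3 + i]!) ∧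
    4 * (ℓ / 3) > 7 * (s / 3) :=
  ⟨repetition_decimate w (by norm_num) (Nat.dvd_of_mod_eq_zero hp) (Nat.dvd_of_mod_eq_zero hs)
    (Nat.dvd_of_mod_eq_zero hl) hbound hrep, by omega⟩

theorem stmt16 (w : List (Fin 3)) (htrip : TripleDistinct w) (p s ℓ : ℕ)
    (hp : p % 3 = 0) (hs : s % 3 = 0) (hl : ℓ % 3 = 0) (hspos : 0 < s)
    (hexp : 4 * ℓ > 7 * s) (hbound : p + ℓ ≤ w.length)
    (hrep : ∀ i, i + s < ℓ → w[p + i]! = w[p + s + i]!) :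
    (∀ i, i + s / 3 < ℓ / 3 →
      ((List.range (w.length / 3)).map (fun j => w[3 * j + 1]!))[p / 3 + i]! =
      ((List.range (w.length / 3)).map (fun j => w[3 * j + 1]!))[p / 3 + s / 3 + i]!) ∧
    4 * (ℓ / 3) > 7 * (s / 3) :=
  stmt16_general w p s ℓ hp hs hl hexp hbound hrep
end
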